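/- arXiv:1112.0771 — 3 statements merged into one kernel-verified Lean document; each statement's English description precedes it below -/
import Mathlib

section
/- A nonempty subset ξ of an inverse semigroup G is a filter (i.e. for all idempotents e and all s ∈ G, es ∈ ξ iff e ∈ ξ and s ∈ ξ) if and only if: (i) ss* ∈ ξ for every s ∈ ξ, (ii) ss*t ∈ ξ for all s,t ∈ ξ, and (iii) ξ is upward closed under the natural partial order. -/
universe u v

/-- An inverse semigroup: every element has a unique generalized inverse. -/
class InverseSemigroup (G : Type u) extends Semigroup G, Star G where
  mul_star_mul_self : ∀ s : G, s * star s * s = s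
  star_mul_self_star : ∀ s : G, star s * s * star s = star s
  star_unique : ∀ s t : G, s * t * s = s → t * s * t = t → t = star s

variable (G : Type u) [InverseSemigroup G]

/-- The defining relations of the prefix expansion S(G). -/
inductive ExpRel : FreeSemigroup G → FreeSemigroup G → Prop
  | rel1 (s t : G) : ExpRel (.of s * .of t * .of (star t)) (.of (s * t) * .of (star t))
  | rel2 (s t : G) : ExpRel (.of (star s) * .of s * .of t) (.of (star s) * .of (s * t))
  | rel3 (s : G) : ExpRel (.of s * .of (star s) * .of s) (.of s)

/-- The congruence generated by the defining relations. -/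
def expCon : Con (FreeSemigroup G) := conGen (ExpRel G)

/-- The prefix expansion S(G) of the inverse semigroup G. -/
def SG : Type u := (expCon G).Quotient

instance : Semigroup (SG G) := Con.semigroup (expCon G)

variable {G}

/-- The canonical generator [s] of S(G). -/
def gen (s : G) : SG G := ((FreeSemigroup.of s : FreeSemigroup G) : (expCon G).Quotient)

/-- ε_s = [s][s*] in S(G). -/
def eps (s : G) : SG G := gen s * gen (star s)

/-- ε_{s₁}⋯ε_{s_n}·x for a list [s₁,…,s_n]. -/
def epsList (l : List G) (x : SG G) : SG G := (l.map eps).foldr (· * ·) x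

/-- ε_A · x for a finite set A ⊆ G. -/
noncomputable def epsSet (A : Finset G) (x : SG G) : SG G := epsList A.toList x

/-- The normal form condition on the pair (A, t). -/
def IsNormalForm (A : Finset G) (t : G) : Prop :=
  t ∈ A ∧ t * star t ∈ A ∧ ∀ a ∈ A, a * star a = t * star t

/-- A partial homomorphism from an inverse semigroup to a semigroup. -/
structure IsPartialHom {H : Type v} [Semigroup H] (π : G → H) : Prop where
  rel1 : ∀ s t : G, π s * π t * π (star t) = π (s * t) * π (star t)
  rel2 : ∀ s t : G, π (star s) * π s * π t = π (star s) * π (s * t)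
  rel3 : ∀ s : G, π s * π (star s) * π s = π s

/-- The natural partial order: x ≤ y iff x = y·e for some idempotent e. -/
def natLE {H : Type v} [Semigroup H] (x y : H) : Prop := ∃ e : H, e * e = e ∧ x = y * e

/-- A filter in an inverse semigroup. -/
def IsFilter (ξ : Set G) : Prop :=
  ξ.Nonempty ∧ ∀ e s : G, e * e = e → (e * s ∈ ξ ↔ e ∈ ξ ∧ s ∈ ξ)

section Aux
variable {G : Type u} [InverseSemigroup G]

local notation "σ" => (star : G → G)

lemma is_sss (s : G) : s * star s * s = s := InverseSemigroup.mul_star_mul_self s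
lemma is_s's' (s : G) : star s * s * star s = star s := InverseSemigroup.star_mul_self_star s

lemma is_star_idem {e : G} (he : e * e = e) : star e = e :=
  (InverseSemigroup.star_unique e e (by rw [he, he]) (by rw [he, he])).symm

lemma is_mul_idem {e f : G} (he : e * e = e) (hf : f * f = f) : (e * f) * (e * f) = e * f := by
  set u := star (e * f) with hu
  have h1 : (e * f) * u * (e * f) = e * f := is_sss (e * f)
  have h2 : u * (e * f) * u = u := is_s's' (e * f)
  have key : f * u * e = u := by
    apply InverseSemigroup.star_unique
    · calc (e * f) * (f * u * e) * (e * f)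
          = e * (f * f) * u * (e * e) * f := by simp [mul_assoc]
        _ = (e * f) * u * (e * f) := by rw [he, hf]; simp [mul_assoc]
        _ = e * f := h1
    · calc (f * u * e) * (e * f) * (f * u * e)
          = f * (u * ((e * e) * (f * f)) * u) * e := by simp [mul_assoc]
        _ = f * (u * (e * f) * u) * e := by rw [he, hf]
        _ = f * u * e := by rw [h2]
  have huu : u * u = u := by
    calc u * u = (f * u * e) * (f * u * e) := by rw [key]
      _ = f * (u * (e * f) * u) * e := by simp [mul_assoc]
      _ = f * u * e := by rw [h2]
      _ = u := key
  have hefu : e * f = u := by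
    have := InverseSemigroup.star_unique u (e * f) h2 h1
    rw [this, is_star_idem huu]
  rw [hefu]; exact huu

lemma is_idem_comm {e f : G} (he : e * e = e) (hf : f * f = f) : e * f = f * e := by
  have hef := is_mul_idem he hf
  have hfe := is_mul_idem hf he
  have : f * e = star (e * f) := by
    apply InverseSemigroup.star_unique
    · calc (e * f) * (f * e) * (e * f) = e * ((f * f) * (e * e)) * f := by simp [mul_assoc]
        _ = (e * f) * (e * f) := by rw [he, hf]; simp [mul_assoc]
        _ = e * f := hef
    · calc (f * e) * (e * f) * (f * e) = f * ((e * e) * (f * f)) * e := by simp [mul_assoc]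
        _ = (f * e) * (f * e) := by rw [he, hf]; simp [mul_assoc]
        _ = f * e := hfe
  rw [this, is_star_idem hef]

lemma is_ss'_idem (s : G) : (s * star s) * (s * star s) = s * star s := by
  calc (s * star s) * (s * star s) = (s * star s * s) * star s := by simp [mul_assoc]
    _ = s * star s := by rw [is_sss]

lemma is_s's_idem (s : G) : (star s * s) * (star s * s) = star s * s := by
  calc (star s * s) * (star s * s) = (star s * s * star s) * s := by simp [mul_assoc]
    _ = star s * s := by rw [is_s's']

end Aux

section Aux2
variable {G : Type u} [InverseSemigroup G]

lemma is_sss' (s : G) : s * (star s * s) = s := by rw [← mul_assoc, is_sss]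

lemma is_star_mul (s t : G) : star (s * t) = star t * star s := by
  symm
  apply InverseSemigroup.star_unique
  · calc (s * t) * (star t * star s) * (s * t)
        = s * ((t * star t) * (star s * s)) * t := by simp [mul_assoc]
      _ = s * ((star s * s) * (t * star t)) * t := by
          rw [is_idem_comm (is_ss'_idem t) (is_s's_idem s)]
      _ = (s * star s * s) * (t * star t * t) := by simp [mul_assoc]
      _ = s * t := by rw [is_sss, is_sss]
  · calc (star t * star s) * (s * t) * (star t * star s)
        = star t * ((star s * s) * (t * star t)) * star s := by simp [mul_assoc]
      _ = star t * ((t * star t) * (star s * s)) * star s := by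
          rw [is_idem_comm (is_s's_idem s) (is_ss'_idem t)]
      _ = (star t * t * star t) * (star s * s * star s) := by simp [mul_assoc]
      _ = star t * star s := by rw [is_s's', is_s's']

end Aux2


theorem isFilter_iff (G : Type u) [InverseSemigroup G] (ξ : Set G) (hne : ξ.Nonempty) :
    IsFilter ξ ↔
      ((∀ s ∈ ξ, s * star s ∈ ξ) ∧
       (∀ s ∈ ξ, ∀ t ∈ ξ, s * star s * t ∈ ξ) ∧
       (∀ s ∈ ξ, ∀ t : G, natLE s t → t ∈ ξ)) := by
  constructor
  · rintro ⟨-, hF⟩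
    have key1 : ∀ s ∈ ξ, s * star s ∈ ξ := by
      intro s hs
      have h : (s * star s) * s ∈ ξ := by rw [is_sss]; exact hs
      exact ((hF _ s (is_ss'_idem s)).mp h).1
    refine ⟨key1, ?_, ?_⟩
    · intro s hs t ht
      exact (hF _ t (is_ss'_idem s)).mpr ⟨key1 s hs, ht⟩
    · rintro s hs t ⟨e, he, hse⟩
      have hff : (t * e * star t) * (t * e * star t) = t * e * star t := by
        calc (t * e * star t) * (t * e * star t)
            = t * (e * (star t * t)) * e * star t := by simp [mul_assoc]
          _ = t * ((star t * t) * e) * e * star t := by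
              rw [is_idem_comm he (is_s's_idem t)]
          _ = (t * star t * t) * (e * e) * star t := by simp [mul_assoc]
          _ = t * e * star t := by rw [is_sss, he]
      have hft : (t * e * star t) * t ∈ ξ := by
        have : (t * e * star t) * t = t * e := by
          calc (t * e * star t) * t = t * (e * (star t * t)) := by simp [mul_assoc]
            _ = t * ((star t * t) * e) := by rw [is_idem_comm he (is_s's_idem t)]
            _ = (t * star t * t) * e := by simp [mul_assoc]
            _ = t * e := by rw [is_sss]
        rw [this, ← hse]; exact hs
      exact ((hF _ t hff).mp hft).2
  · rintro ⟨h1, h2, h3⟩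
    refine ⟨hne, fun e s he => ⟨fun hes => ?_, fun ⟨heξ, hsξ⟩ => ?_⟩⟩
    · have hsmem : s ∈ ξ := by
        refine h3 (e * s) hes s ⟨star s * e * s, ?_, ?_⟩
        · calc (star s * e * s) * (star s * e * s)
              = star s * (e * (s * star s)) * e * s := by simp [mul_assoc]
            _ = star s * ((s * star s) * e) * e * s := by
                rw [is_idem_comm he (is_ss'_idem s)]
            _ = (star s * s * star s) * (e * e) * s := by simp [mul_assoc]
            _ = star s * e * s := by rw [is_s's', he]
        · calc e * s = (e * (s * star s)) * s := by rw [mul_assoc, mul_assoc, is_sss']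
            _ = ((s * star s) * e) * s := by rw [is_idem_comm he (is_ss'_idem s)]
            _ = s * (star s * e * s) := by simp [mul_assoc]
      have hg : (e * s) * star (e * s) ∈ ξ := h1 _ hes
      have hgeq : (e * s) * star (e * s) = e * (s * star s * e) := by
        rw [is_star_mul, is_star_idem he]; simp [mul_assoc]
      have hfidem : (s * star s * e) * (s * star s * e) = s * star s * e := by
        calc (s * star s * e) * (s * star s * e)
            = s * star s * (e * (s * star s)) * e := by simp [mul_assoc]
          _ = s * star s * ((s * star s) * e) * e := by
              rw [is_idem_comm he (is_ss'_idem s)]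
          _ = ((s * star s) * (s * star s)) * (e * e) := by simp [mul_assoc]
          _ = s * star s * e := by rw [is_ss'_idem, he]
      have hemem : e ∈ ξ := by
        refine h3 _ hg e ⟨s * star s * e, hfidem, ?_⟩
        rw [hgeq]
      exact ⟨hemem, hsmem⟩
    · have := h2 e heξ s hsξ
      rwa [is_star_idem he, he] at this
end

section
/- Uniqueness of normal forms: if x = ε_A[s] and y = ε_B[t] are elements of S(G) written in normal form and x = y, then s = t and A = B. -/
universe u v

variable (G : Type u) [InverseSemigroup G]

variable {G}

namespace ISG
variable {G : Type u} [InverseSemigroup G]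

lemma sss (s : G) : s * star s * s = s := InverseSemigroup.mul_star_mul_self s
lemma s's's (s : G) : star s * s * star s = star s := InverseSemigroup.star_mul_self_star s

lemma star_star (s : G) : star (star s) = s :=
  (InverseSemigroup.star_unique (star s) s (s's's s) (sss s)).symm

lemma star_idem {e : G} (he : e * e = e) : star e = e :=
  (InverseSemigroup.star_unique e e (by rw [he, he]) (by rw [he, he])).symm

lemma idem_ss (s : G) : (s * star s) * (s * star s) = s * star s := by
  rw [mul_assoc, ← mul_assoc (star s), s's's]

lemma idem_s's (s : G) : (star s * s) * (star s * s) = star s * s := by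
  rw [mul_assoc, ← mul_assoc s, sss]

lemma idem_mul_idem {e f : G} (he : e * e = e) (hf : f * f = f) :
    (e * f) * (e * f) = e * f := by
  set a := e * f with ha
  have hb : f * star a * e = star a := by
    apply InverseSemigroup.star_unique
    · -- a * (f * star a * e) * a = a
      calc a * (f * star a * e) * a = (e * (f * f)) * star a * (e * e) * f := by
            simp only [ha]; simp only [mul_assoc]
        _ = a * star a * a := by rw [he, hf, ha]; simp only [mul_assoc]
        _ = a := sss a
    · calc (f * star a * e) * a * (f * star a * e)
          = f * (star a * ((e * e) * (f * f)) * star a) * e := by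
            simp only [ha, mul_assoc]
        _ = f * (star a * a * star a) * e := by rw [he, hf]
        _ = f * star a * e := by rw [s's's]
  have hstar : star a * star a = star a := by
    calc star a * star a = (f * star a * e) * (f * star a * e) := by rw [hb]
      _ = f * (star a * (e * f) * star a) * e := by simp only [mul_assoc]
      _ = f * star a * e := by rw [← ha, s's's]
      _ = star a := hb
  have : a = star a := by rw [← star_idem hstar, star_star]
  rw [this]; exact hstar

lemma idem_comm {e f : G} (he : e * e = e) (hf : f * f = f) : e * f = f * e := by
  have h1 : e * f = star (e * f) := by
    rw [star_idem (idem_mul_idem he hf)]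
  have h2 : f * e = star (e * f) := by
    apply InverseSemigroup.star_unique
    · calc e * f * (f * e) * (e * f) = e * (f * f) * (e * e) * f := by
            simp only [mul_assoc]
        _ = (e * f) * (e * f) := by rw [he, hf]; simp only [mul_assoc]
        _ = e * f := idem_mul_idem he hf
    · calc f * e * (e * f) * (f * e) = f * (e * e) * (f * f) * e := by
            simp only [mul_assoc]
        _ = (f * e) * (f * e) := by rw [he, hf]; simp only [mul_assoc]
        _ = f * e := idem_mul_idem hf he
  rw [h1, h2]

lemma star_mul (s t : G) : star (s * t) = star t * star s := by
  symm; apply InverseSemigroup.star_unique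
  · calc s * t * (star t * star s) * (s * t)
        = s * ((t * star t) * (star s * s)) * t := by simp only [mul_assoc]
      _ = s * ((star s * s) * (t * star t)) * t := by
          rw [idem_comm (idem_ss t) (idem_s's s)]
      _ = (s * star s * s) * (t * star t * t) := by simp only [mul_assoc]
      _ = s * t := by rw [sss, sss]
  · calc star t * star s * (s * t) * (star t * star s)
        = star t * ((star s * s) * (t * star t)) * star s := by simp only [mul_assoc]
      _ = star t * ((t * star t) * (star s * s)) * star s := by
          rw [idem_comm (idem_s's s) (idem_ss t)]
      _ = (star t * t * star t) * (star s * s * star s) := by simp only [mul_assoc]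
      _ = star t * star s := by rw [s's's, s's's]

-- key identities
/-- (xy)(xy)* (x x*) = (xy)(xy)* -/
lemma key1 (x y : G) : (x * y) * star (x * y) * (x * star x) = (x * y) * star (x * y) := by
  rw [star_mul]
  calc x * y * (star y * star x) * (x * star x)
      = x * y * star y * (star x * x * star x) := by simp only [mul_assoc]
    _ = x * y * star y * star x := by rw [s's's]
    _ = x * y * (star y * star x) := by simp only [mul_assoc]

/-- (xy)(xy)* x = x (y y*) -/
lemma key2 (x y : G) : (x * y) * star (x * y) * x = x * (y * star y) := by
  rw [star_mul]
  calc x * y * (star y * star x) * x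
      = x * ((y * star y) * (star x * x)) := by simp only [mul_assoc]
    _ = x * ((star x * x) * (y * star y)) := by rw [idem_comm (idem_ss y) (idem_s's x)]
    _ = (x * star x * x) * (y * star y) := by simp only [mul_assoc]
    _ = x * (y * star y) := by rw [sss]


end ISG

open ISG

section Model
variable (G : Type u) [InverseSemigroup G]

noncomputable local instance : DecidableEq G := Classical.decEq G

def NF : Type u := Finset G × G

variable {G}

noncomputable def nmul (p q : NF G) : NF G :=
  (Finset.image (fun a => (p.2 * q.2) * star (p.2 * q.2) * a) p.1 ∪
     Finset.image (fun b => p.2 * b) q.1, p.2 * q.2)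

noncomputable instance : Semigroup (NF G) where
  mul := nmul
  mul_assoc p q r := by
    show nmul (nmul p q) r = nmul p (nmul q r)
    obtain ⟨A, s⟩ := p; obtain ⟨B, t⟩ := q; obtain ⟨C, u⟩ := r
    unfold nmul
    simp only [Finset.image_union, Finset.image_image, Finset.union_assoc, Function.comp]
    refine Prod.ext ?_ (mul_assoc s t u)
    dsimp only
    have hA : ∀ a : G, s * t * u * star (s * t * u) * (s * t * star (s * t) * a)
        = s * (t * u) * star (s * (t * u)) * a := by
      intro a
      calc s * t * u * star (s * t * u) * (s * t * star (s * t) * a)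
          = (s * t * u * star (s * t * u) * (s * t * star (s * t))) * a :=
            (mul_assoc _ _ a).symm
        _ = (s * t * u * star (s * t * u)) * a := by rw [key1 (s * t) u]
        _ = s * (t * u) * star (s * (t * u)) * a := by rw [mul_assoc s t u]
    have hB : ∀ b : G, s * t * u * star (s * t * u) * (s * b)
        = s * (t * u * star (t * u) * b) := by
      intro b
      calc s * t * u * star (s * t * u) * (s * b)
          = (s * (t * u) * star (s * (t * u)) * s) * b := by
            rw [mul_assoc s t u, ← mul_assoc]
        _ = (s * (t * u * star (t * u))) * b := by rw [key2 s (t * u)]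
        _ = s * (t * u * star (t * u) * b) := by simp only [mul_assoc]
    have hA2 : ∀ a : G, s * (t * (u * (star (s * (t * u)) * (s * (t * (star (s * t) * a))))))
        = s * (t * (u * (star (s * (t * u)) * a))) := fun a => by
      simpa only [mul_assoc] using hA a
    have hB2 : ∀ b : G, s * (t * (u * (star (s * (t * u)) * (s * b))))
        = s * (t * (u * (star (t * u) * b))) := fun b => by
      simpa only [mul_assoc] using hB b
    simp only [Function.comp_def, mul_assoc, hA2, hB2]

end Model

section Model2
variable {G : Type u} [InverseSemigroup G]

noncomputable local instance inst_s18 : DecidableEq G := Classical.decEq G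

noncomputable def pim (g : G) : NF G := ({g, g * star g}, g)

lemma R1 (s t : G) : nmul (nmul (pim s) (pim t)) (pim (star t)) = nmul (pim (s * t)) (pim (star t)) := by
  unfold nmul pim
  refine Prod.ext ?_ rfl
  dsimp only
  ext x
  simp only [Finset.mem_union, Finset.mem_image, Finset.mem_insert, Finset.mem_singleton,
    or_and_right, exists_or, exists_eq_left, exists_eq_left']
  have lemC : s * t * star t * star (s * t * star t) * (s * (t * star t)) = s * t * star t := by
    rw [mul_assoc s t (star t)]; exact sss _
  simp only [key1 s t, key2 s t, lemC]
  tauto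

lemma R2 (s t : G) : nmul (nmul (pim (star s)) (pim s)) (pim t) = nmul (pim (star s)) (pim (s * t)) := by
  unfold nmul pim
  refine Prod.ext ?_ (mul_assoc _ _ _)
  dsimp only
  ext x
  simp only [Finset.mem_union, Finset.mem_image, Finset.mem_insert, Finset.mem_singleton,
    or_and_right, exists_or, exists_eq_left, exists_eq_left']
  have hassoc : star s * (s * t) = star s * s * t := (mul_assoc _ _ _).symm
  have hx : star (star s * s) = star s * s := star_idem (idem_s's s)
  have ruleA : star s * s * star (star s * s) * star s = star s := by
    rw [hx, idem_s's, s's's]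
  have ruleB : star s * s * star (star s * s) * (star s * s) = star s * s := by
    rw [hx, idem_s's, idem_s's]
  have ruleD : star s * (s * star s) = star s := by rw [← mul_assoc, s's's]
  have ruleE : star s * s * t * star (star s * s * t) = star s * s * (t * star t) := by
    rw [ISG.star_mul, hx]
    calc star s * s * t * (star t * (star s * s))
        = star s * s * ((t * star t) * (star s * s)) := by simp only [mul_assoc]
      _ = star s * s * ((star s * s) * (t * star t)) := by
          rw [idem_comm (idem_ss t) (idem_s's s)]
      _ = (star s * s * (star s * s)) * (t * star t) := by simp only [mul_assoc]
      _ = star s * s * (t * star t) := by rw [idem_s's]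
  have ruleC : star s * s * (t * star t) * (star s * s) = star s * s * (t * star t) := by
    calc star s * s * (t * star t) * (star s * s)
        = star s * s * ((t * star t) * (star s * s)) := by simp only [mul_assoc]
      _ = star s * s * ((star s * s) * (t * star t)) := by
          rw [idem_comm (idem_ss t) (idem_s's s)]
      _ = (star s * s * (star s * s)) * (t * star t) := by simp only [mul_assoc]
      _ = star s * s * (t * star t) := by rw [idem_s's]
  have h5 : star s * (s * t * star (s * t)) = star s * s * (t * star t) * star s := by
    simp only [ISG.star_mul, mul_assoc]
  simp only [hassoc, ruleA, ruleB, ISG.star_star, ruleD, ruleE, ruleC, h5]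
  tauto

lemma R3 (s : G) : nmul (nmul (pim s) (pim (star s))) (pim s) = pim s := by
  unfold nmul pim
  refine Prod.ext ?_ ?_
  swap
  · show s * star s * s = s
    exact sss s
  dsimp only
  ext x
  simp only [Finset.mem_union, Finset.mem_image, Finset.mem_insert, Finset.mem_singleton,
    or_and_right, exists_or, exists_eq_left, exists_eq_left']
  have d1 : s * (star s * s) = s := by rw [← mul_assoc, sss]
  simp only [sss, star_idem (idem_ss s), idem_ss, ISG.star_star, d1]
  tauto

end Model2

section Final
variable {G : Type u} [InverseSemigroup G]

noncomputable local instance inst_s18_2 : DecidableEq G := Classical.decEq G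

open ISG

lemma pim_eps (a : G) : nmul (pim a) (pim (star a)) = ({a, a * star a}, a * star a) := by
  unfold nmul pim
  refine Prod.ext ?_ rfl
  dsimp only
  ext x
  simp only [Finset.mem_union, Finset.mem_image, Finset.mem_insert, Finset.mem_singleton,
    or_and_right, exists_or, exists_eq_left, exists_eq_left']
  have d1 : a * (star a * a) = a := by rw [← mul_assoc, sss]
  simp only [star_idem (idem_ss a), idem_ss, ISG.star_star, sss, d1]
  tauto

lemma step_mul (a : G) (C : Finset G) (u : G) (ha : a * star a = u * star u)
    (hu : u * star u ∈ C) (hC : ∀ c ∈ C, c * star c = u * star u) :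
    nmul ({a, a * star a}, a * star a) (C, u) = (insert a C, u) := by
  have h2 : a * star a * u = u := by rw [ha]; exact sss u
  unfold nmul
  refine Prod.ext ?_ h2
  dsimp only
  have himg : Finset.image (fun b => a * star a * b) C = C := by
    rw [Finset.image_congr (g := id) (fun b hb => by
      show a * star a * b = b
      rw [ha, ← hC b hb]; exact sss b), Finset.image_id]
  rw [himg, h2]
  have hfa : u * star u * a = a := by rw [← ha]; exact sss a
  have hfaa : u * star u * (a * star a) = u * star u := by rw [ha]; exact idem_ss u
  rw [Finset.image_insert, Finset.image_singleton, hfa, hfaa, Finset.insert_union,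
    ← Finset.insert_eq, Finset.insert_eq_self.mpr hu]

noncomputable def Fhom : FreeSemigroup G →ₙ* NF G := FreeSemigroup.lift pim

def kerCon : Con (FreeSemigroup G) where
  r x y := Fhom x = Fhom y
  iseqv := ⟨fun _ => rfl, Eq.symm, Eq.trans⟩
  mul' h1 h2 := by
    simp only [map_mul]
    exact congrArg₂ (· * ·) h1 h2

lemma expCon_le : expCon G ≤ kerCon := by
  apply Con.conGen_le.mpr
  intro x y hxy
  cases hxy with
  | rel1 s t =>
      show Fhom _ = Fhom _
      simp only [Fhom, map_mul, FreeSemigroup.lift_of]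
      exact R1 s t
  | rel2 s t =>
      show Fhom _ = Fhom _
      simp only [Fhom, map_mul, FreeSemigroup.lift_of]
      exact R2 s t
  | rel3 s =>
      show Fhom _ = Fhom _
      simp only [Fhom, map_mul, FreeSemigroup.lift_of]
      exact R3 s

def wordOf (l : List G) (u : G) : FreeSemigroup G :=
  (l.map (fun a => FreeSemigroup.of a * FreeSemigroup.of (star a))).foldr (· * ·) (.of u)

lemma epsList_eq (l : List G) (u : G) :
    epsList l (gen u) = ((wordOf l u : FreeSemigroup G) : (expCon G).Quotient) := by
  induction l with
  | nil => rfl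
  | cons a l ih =>
      show eps a * epsList l (gen u) = _
      rw [ih]
      rfl

lemma Fhom_word (l : List G) (u : G) (hl : ∀ a ∈ l, a * star a = u * star u) :
    Fhom (wordOf l u) = (l.toFinset ∪ {u, u * star u}, u) := by
  induction l with
  | nil =>
      show pim u = _
      simp [pim]
      congr
  | cons a l ih =>
      have h1 : Fhom (wordOf (a :: l) u)
          = nmul (nmul (pim a) (pim (star a))) (Fhom (wordOf l u)) := by
        show Fhom ((.of a * .of (star a)) * wordOf l u) = _
        simp only [Fhom, map_mul, FreeSemigroup.lift_of]
        rfl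
      have hu : u * star u ∈ l.toFinset ∪ {u, u * star u} := by simp
      have hC : ∀ c ∈ l.toFinset ∪ {u, u * star u}, c * star c = u * star u := by
        intro c hc
        rcases Finset.mem_union.mp hc with hc | hc
        · exact hl c (List.mem_cons_of_mem a (List.mem_toFinset.mp hc))
        · rcases Finset.mem_insert.mp hc with rfl | hc
          · rfl
          · rw [Finset.mem_singleton.mp hc, star_idem (idem_ss u)]
            exact idem_ss u
      rw [h1, pim_eps, ih (fun b hb => hl b (List.mem_cons_of_mem a hb)),
        step_mul a _ u (hl a List.mem_cons_self) hu hC]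
      rw [List.toFinset_cons, Finset.insert_union]

end Final

theorem normal_form_unique (G : Type u) [InverseSemigroup G] (A B : Finset G) (s t : G)
    (hA : IsNormalForm A s) (hB : IsNormalForm B t)
    (h : epsSet A (gen s) = epsSet B (gen t)) : s = t ∧ A = B := by
  classical
  obtain ⟨hsA, hssA, hallA⟩ := hA
  obtain ⟨htB, httB, hallB⟩ := hB
  have h1 : epsSet A (gen s) = ((wordOf A.toList s : FreeSemigroup G) : (expCon G).Quotient) :=
    epsList_eq _ _
  have h2 : epsSet B (gen t) = ((wordOf B.toList t : FreeSemigroup G) : (expCon G).Quotient) :=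
    epsList_eq _ _
  have hcon : expCon G (wordOf A.toList s) (wordOf B.toList t) :=
    (expCon G).eq.mp (h1 ▸ h2 ▸ h)
  have hker : Fhom (wordOf A.toList s) = Fhom (wordOf B.toList t) :=
    Con.le_def.mp expCon_le hcon
  rw [Fhom_word A.toList s (fun a ha => hallA a (Finset.mem_toList.mp ha)),
    Fhom_word B.toList t (fun a ha => hallB a (Finset.mem_toList.mp ha)),
    Finset.toList_toFinset, Finset.toList_toFinset] at hker
  have hAu : A ∪ {s, s * star s} = A := Finset.union_eq_left.mpr (by
    intro x hx
    rcases Finset.mem_insert.mp hx with rfl | hx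
    · exact hsA
    · rw [Finset.mem_singleton.mp hx]; exact hssA)
  have hBu : B ∪ {t, t * star t} = B := Finset.union_eq_left.mpr (by
    intro x hx
    rcases Finset.mem_insert.mp hx with rfl | hx
    · exact htB
    · rw [Finset.mem_singleton.mp hx]; exact httB)
  rw [hAu, hBu] at hker
  exact ⟨congrArg Prod.snd hker, congrArg Prod.fst hker⟩
end

section
/- Let G be a finite inverse semigroup. For each idempotent e let p_e be the number of elements s ∈ G with ss* = e. Then the number of idempotents of S(G) equals the sum over idempotents e of 2^{p_e − 1}, the number of non-idempotent elements equals the sum over idempotents e of 2^{p_e − 2}(p_e − 1), and hence |S(G)| = Σ_e 2^{p_e − 2}(p_e + 1). -/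
universe u v

variable (G : Type u) [InverseSemigroup G]

variable {G}

namespace CardSGAux

variable {G : Type u} [InverseSemigroup G]

lemma i1 (s : G) : s * star s * s = s := InverseSemigroup.mul_star_mul_self s
lemma i2 (s : G) : star s * s * star s = star s := InverseSemigroup.star_mul_self_star s
lemma sstar (s : G) : star (star s) = s :=
  (InverseSemigroup.star_unique (star s) s (i2 s) (i1 s)).symm
lemma star_idem {e : G} (he : e * e = e) : star e = e :=
  (InverseSemigroup.star_unique e e (by rw [he, he]) (by rw [he, he])).symm
lemma mull {a b c : G} (h : a * b = c) (y : G) : a * (b * y) = c * y := by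
  rw [← mul_assoc, h]
lemma c1 (s y : G) : s * (star s * (s * y)) = s * y := by
  rw [← mul_assoc, ← mul_assoc, i1]
lemma c2 (s y : G) : star s * (s * (star s * y)) = star s * y := by
  rw [← mul_assoc, ← mul_assoc, i2]
lemma c1' (s : G) : s * (star s * s) = s := by rw [← mul_assoc, i1]
lemma c2' (s : G) : star s * (s * star s) = star s := by rw [← mul_assoc, i2]
lemma idem_ss (s : G) : (s * star s) * (s * star s) = s * star s := by
  rw [← mul_assoc, i1]
lemma idem_s's (s : G) : (star s * s) * (star s * s) = star s * s := by
  rw [← mul_assoc, i2]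

lemma idem_comm {e f : G} (he : e * e = e) (hf : f * f = f) : e * f = f * e := by
  have key : f * star (e * f) * e = star (e * f) := by
    refine InverseSemigroup.star_unique (e * f) _ ?_ ?_
    · have h := c1' (e * f)
      simp only [mul_assoc, mull he, mull hf] at h ⊢
      exact h
    · have h := c2 (e * f) e
      simp only [mul_assoc, mull he, mull hf] at h ⊢
      rw [h]
  have hxx : star (e * f) * star (e * f) = star (e * f) := by
    conv_lhs => rw [← key]
    have h := c2 (e * f) e
    have key' := key
    simp only [mul_assoc] at h key' ⊢
    rw [← mul_assoc e f] at h ⊢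
    rw [h]
    exact key'
  have hef : e * f = star (e * f) := (sstar (e * f)).symm.trans (star_idem hxx)
  have ef_idem : (e * f) * (e * f) = e * f := by rw [hef]; exact hxx
  -- same for f * e
  have key2 : e * star (f * e) * f = star (f * e) := by
    refine InverseSemigroup.star_unique (f * e) _ ?_ ?_
    · have h := c1' (f * e)
      simp only [mul_assoc, mull he, mull hf] at h ⊢
      exact h
    · have h := c2 (f * e) f
      simp only [mul_assoc, mull he, mull hf] at h ⊢
      rw [h]
  have hxx2 : star (f * e) * star (f * e) = star (f * e) := by
    conv_lhs => rw [← key2]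
    have h := c2 (f * e) f
    have key' := key2
    simp only [mul_assoc] at h key' ⊢
    rw [← mul_assoc f e] at h ⊢
    rw [h]
    exact key'
  have hfe : f * e = star (f * e) := (sstar (f * e)).symm.trans (star_idem hxx2)
  have fe_idem : (f * e) * (f * e) = f * e := by rw [hfe]; exact hxx2
  have final : f * e = star (e * f) := by
    refine InverseSemigroup.star_unique (e * f) (f * e) ?_ ?_
    · have h := ef_idem
      simp only [mul_assoc, mull he, mull hf] at h ⊢
      exact h
    · have h := fe_idem
      simp only [mul_assoc, mull he, mull hf] at h ⊢
      exact h
  rw [final, ← hef]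

lemma star_mul' (s t : G) : star (s * t) = star t * star s := by
  have hc := idem_comm (idem_s's s) (idem_ss t)
  refine (InverseSemigroup.star_unique (s * t) (star t * star s) ?_ ?_).symm
  · -- (s*t) * (star t * star s) * (s*t) = s*t
    show s * t * (star t * star s) * (s * t) = s * t
    simp only [mul_assoc]
    rw [← mul_assoc (star s) s t, ← mul_assoc t (star t), ← mul_assoc (t * star t), ← hc]
    simp only [mul_assoc]
    rw [c1 s, c1']
  · show star t * star s * (s * t) * (star t * star s) = star t * star s
    simp only [mul_assoc]
    rw [← mul_assoc (star s) s, ← mul_assoc t (star t), ← mul_assoc (star s * s), hc]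
    simp only [mul_assoc]
    rw [c2' s, ← mul_assoc t (star t) (star s), ← mul_assoc (star t)]
    rw [c2' t]




variable {G : Type u} [InverseSemigroup G]

-- flat commutation lemma: (t t*)(s* s) = (s* s)(t t*), with continuation
lemma comm1' (s t : G) (y : G) :
    t * (star t * (star s * (s * y))) = star s * (s * (t * (star t * y))) := by
  have h := congrArg (· * y) (idem_comm (idem_ss t) (idem_s's s))
  simp only [mul_assoc] at h
  exact h

lemma comm1'' (s t : G) :
    t * (star t * (star s * s)) = star s * (s * (t * star t)) := by
  have h := idem_comm (idem_ss t) (idem_s's s)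
  simp only [mul_assoc] at h
  exact h

section Model
variable (G) [DecidableEq G]

abbrev PM : Type u := Finset G × G

variable {G}

instance : Mul (PM G) :=
  ⟨fun x y => (x.1.image (fun a => (x.2 * y.2) * star (x.2 * y.2) * a) ∪
      y.1.image (fun b => x.2 * b), x.2 * y.2)⟩

lemma pmul_def (x y : PM G) :
    x * y = (x.1.image (fun a => (x.2 * y.2) * star (x.2 * y.2) * a) ∪
      y.1.image (fun b => x.2 * b), x.2 * y.2) := rfl

lemma pmul_snd (x y : PM G) : (x * y).2 = x.2 * y.2 := rfl

lemma image_comp_mul {a b c : G} (h : a * b = c) (S : Finset G) :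
    (S.image (fun x => b * x)).image (fun x => a * x) = S.image (fun x => c * x) := by
  rw [Finset.image_image]
  apply Finset.image_congr
  intro x _
  show a * (b * x) = c * x
  rw [← mul_assoc, h]

omit [DecidableEq G] in
lemma G1 (w u : G) : (w * u) * star (w * u) * (w * star w) = (w * u) * star (w * u) := by
  simp only [star_mul', mul_assoc, c2']

omit [DecidableEq G] in
lemma G2 (s v : G) : (s * v) * star (s * v) * s = s * (v * star v) := by
  simp only [star_mul', mul_assoc]
  rw [comm1'' s v]
  simp only [c1]

instance : Semigroup (PM G) where
  mul_assoc x y z := by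
    obtain ⟨X, s⟩ := x; obtain ⟨Y, t⟩ := y; obtain ⟨Z, u⟩ := z
    have h2 : ((s * t) * u) * star ((s * t) * u) * s = s * ((t * u) * star (t * u)) := by
      rw [mul_assoc s t u]; exact G2 s (t * u)
    simp only [pmul_def, Prod.mk.injEq]
    constructor
    · rw [Finset.image_union, Finset.image_union]
      rw [image_comp_mul (G1 (s*t) u), image_comp_mul h2,
        image_comp_mul (rfl : s * ((t*u) * star (t*u)) = s * ((t*u) * star (t*u))),
        image_comp_mul (rfl : s * t = s * t)]
      simp only [mul_assoc, Finset.union_assoc]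
    · exact mul_assoc s t u

end Model



section Model2
variable {G : Type u} [InverseSemigroup G] [DecidableEq G]

def piM (s : G) : PM G := ({s, s * star s}, s)

set_option maxHeartbeats 1000000 in
lemma piM_rel1 (s t : G) : piM s * piM t * piM (star t) = piM (s * t) * piM (star t) := by
  simp only [piM, pmul_def, Finset.image_union, Finset.image_insert, Finset.image_singleton,
    star_mul', sstar, mul_assoc, c1, c2, c1', c2', comm1', comm1'', Prod.mk.injEq]
  constructor
  · ext x
    simp only [Finset.mem_union, Finset.mem_insert, Finset.mem_singleton]
    tauto
  · trivial

set_option maxHeartbeats 1000000 in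
lemma piM_rel2 (s t : G) : piM (star s) * piM s * piM t = piM (star s) * piM (s * t) := by
  simp only [piM, pmul_def, Finset.image_union, Finset.image_insert, Finset.image_singleton,
    star_mul', sstar, mul_assoc, c1, c2, c1', c2', comm1', comm1'', Prod.mk.injEq]
  constructor
  · ext x
    simp only [Finset.mem_union, Finset.mem_insert, Finset.mem_singleton]
    tauto
  · trivial

set_option maxHeartbeats 1000000 in
lemma piM_rel3 (s : G) : piM s * piM (star s) * piM s = piM s := by
  simp only [piM, pmul_def, Finset.image_union, Finset.image_insert, Finset.image_singleton,
    star_mul', sstar, mul_assoc, c1, c2, c1', c2', comm1', comm1'', Prod.mk.injEq]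
  constructor
  · ext x
    simp only [Finset.mem_union, Finset.mem_insert, Finset.mem_singleton]
    tauto
  · trivial

end Model2



section SGL
variable {G : Type u} [InverseSemigroup G]

def toSG (a : FreeSemigroup G) : SG G := (a : (expCon G).Quotient)

lemma toSG_mul (a b : FreeSemigroup G) : toSG (a * b) = toSG a * toSG b := rfl
lemma toSG_of (s : G) : toSG (.of s) = gen s := rfl

lemma rel_eq {a b : FreeSemigroup G} (h : ExpRel G a b) : toSG a = toSG b :=
  ((expCon G).eq).2 (ConGen.Rel.of _ _ h)

lemma r1 (s t : G) : gen s * gen t * gen (star t) = gen (s * t) * gen (star t) :=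
  rel_eq (ExpRel.rel1 s t)
lemma r2 (s t : G) : gen (star s) * gen s * gen t = gen (star s) * gen (s * t) :=
  rel_eq (ExpRel.rel2 s t)
lemma r3 (s : G) : gen s * gen (star s) * gen s = gen s :=
  rel_eq (ExpRel.rel3 s)

lemma r2' (z w : G) : gen z * gen (star z) * gen w = gen z * gen (star z * w) := by
  have h := r2 (star z) w
  rwa [sstar] at h

lemma genR (z u : G) : gen z * gen u = gen (z * u * star u) * gen u := by
  conv_lhs => rw [← r3 u]
  rw [← mul_assoc, ← mul_assoc, r1 z u]
  have h := r1 (z * u) (star u)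
  rw [sstar] at h
  rw [h]

/-- The free-semigroup congruence induced by a hom. -/
def mulker {H : Type v} [Semigroup H] (f : FreeSemigroup G →ₙ* H) : Con (FreeSemigroup G) :=
  { toSetoid := ⟨fun a b => f a = f b, ⟨fun _ => rfl, Eq.symm, Eq.trans⟩⟩,
    mul' := fun h₁ h₂ => by
      show f _ = f _
      rw [map_mul, map_mul, h₁, h₂] }

lemma exp_le_mulker {H : Type v} [Semigroup H] (f : FreeSemigroup G →ₙ* H)
    (h1 : ∀ s t : G, f (.of s) * f (.of t) * f (.of (star t))
        = f (.of (s * t)) * f (.of (star t)))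
    (h2 : ∀ s t : G, f (.of (star s)) * f (.of s) * f (.of t)
        = f (.of (star s)) * f (.of (s * t)))
    (h3 : ∀ s : G, f (.of s) * f (.of (star s)) * f (.of s) = f (.of s)) :
    expCon G ≤ mulker f := by
  apply Con.conGen_le.2
  rintro a b (⟨s, t⟩ | ⟨s, t⟩ | ⟨s⟩)
  · show f _ = f _; simpa [map_mul] using h1 s t
  · show f _ = f _; simpa [map_mul] using h2 s t
  · show f _ = f _; simpa [map_mul] using h3 s

def liftSG {H : Type v} [Semigroup H] (f : FreeSemigroup G →ₙ* H)
    (hle : expCon G ≤ mulker f) : SG G → H :=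
  fun x => Con.liftOn x f (fun _ _ h => hle h)

lemma liftSG_coe {H : Type v} [Semigroup H] (f : FreeSemigroup G →ₙ* H)
    (hle : expCon G ≤ mulker f) (a : FreeSemigroup G) :
    liftSG f hle (toSG a) = f a := rfl

lemma liftSG_gen {H : Type v} [Semigroup H] (f : FreeSemigroup G →ₙ* H)
    (hle : expCon G ≤ mulker f) (s : G) :
    liftSG f hle (gen s) = f (.of s) := rfl

lemma liftSG_mul {H : Type v} [Semigroup H] (f : FreeSemigroup G →ₙ* H)
    (hle : expCon G ≤ mulker f) (x y : SG G) :
    liftSG f hle (x * y) = liftSG f hle x * liftSG f hle y :=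
  Con.induction_on₂ x y (fun a b => map_mul f a b)

/-- The star-reversal anti-involution. -/
def thetaF : FreeSemigroup G →ₙ* (SG G)ᵐᵒᵖ :=
  FreeSemigroup.lift (fun s => MulOpposite.op (gen (star s)))

lemma thetaF_le : expCon G ≤ mulker (thetaF (G := G)) := by
  refine exp_le_mulker _ ?_ ?_ ?_
  · intro s t
    simp only [thetaF, FreeSemigroup.lift_of, ← MulOpposite.op_mul, sstar, star_mul']
    rw [MulOpposite.op_inj, ← mul_assoc]
    exact r2' t (star s)
  · intro s t
    simp only [thetaF, FreeSemigroup.lift_of, ← MulOpposite.op_mul, sstar, star_mul']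
    rw [MulOpposite.op_inj, ← mul_assoc]
    have h := r1 (star t) (star s)
    rwa [sstar] at h
  · intro s
    simp only [thetaF, FreeSemigroup.lift_of, ← MulOpposite.op_mul, sstar, star_mul']
    rw [MulOpposite.op_inj, ← mul_assoc]
    have h := r3 (star s)
    rwa [sstar] at h

def Th : SG G → SG G := fun x => (liftSG thetaF thetaF_le x).unop

lemma Th_gen (s : G) : Th (gen s) = gen (star s) := rfl

lemma Th_mul (x y : SG G) : Th (x * y) = Th y * Th x := by
  unfold Th
  rw [liftSG_mul]
  rfl

lemma Th_invol (x : SG G) : Th (Th x) = x := by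
  refine Con.induction_on x (fun w => ?_)
  show Th (Th (toSG w)) = toSG w
  induction w using FreeSemigroup.recOnMul with
  | ih1 s => rw [toSG_of, Th_gen, Th_gen, sstar]
  | ih2 a y iha ihy =>
    rw [toSG_mul, Th_mul, Th_mul, iha, ihy]

lemma ins (z u : G) : gen z * gen u = gen z * gen (star z * z * u) := by
  have h : Th (gen z * gen u) = Th (gen z * gen (star z * z * u)) := by
    rw [Th_mul, Th_mul, Th_gen, Th_gen, Th_gen]
    have h2 := genR (star u) (star z)
    rw [sstar] at h2
    rw [h2]
    congr 2
    simp only [star_mul', sstar, mul_assoc]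
  have := congrArg Th h
  rwa [Th_invol, Th_invol] at this

end SGL



section SGL2
variable {G : Type u} [InverseSemigroup G]

lemma comm2' (a c y : G) :
    c * (star c * (a * (star a * y))) = a * (star a * (c * (star c * y))) := by
  have h := congrArg (· * y) (idem_comm (idem_ss c) (idem_ss a))
  simp only [mul_assoc] at h
  exact h

lemma comm2'' (a c : G) :
    c * (star c * (a * star a)) = a * (star a * (c * star c)) := by
  have h := idem_comm (idem_ss c) (idem_ss a)
  simp only [mul_assoc] at h
  exact h

lemma gzu (t u : G) : t * u * star u * u = t * u := by
  simp only [mul_assoc, c1']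

lemma eps_def (s : G) : eps s = gen s * gen (star s) := rfl

lemma genK (t u : G) : gen t * gen u = eps (t * u * star u) * gen (t * u) := by
  rw [genR t u, ins (t * u * star u) u,
    mul_assoc (star (t * u * star u)) (t * u * star u) u, gzu t u, ← r2' (t * u * star u) (t * u)]
  rfl

lemma sf {a b : G} (h : a * star a * b = b) :
    eps a * eps b = gen b * gen (star b * a) * gen (star a) := by
  have ha : a * (star a * b) = b := by rw [← mul_assoc]; exact h
  have hb : star b * (a * star a) = star b := by
    have h2 := congrArg star h
    rw [star_mul', star_mul', sstar] at h2
    exact h2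
  show gen a * gen (star a) * (gen b * gen (star b)) = _
  rw [← mul_assoc, r2' a b]
  have hb2 : star b = star (star a * b) * star a := by
    rw [star_mul', sstar, mul_assoc]
    exact hb.symm
  conv_lhs => rw [hb2]
  rw [mul_assoc (gen a) (gen (star a * b)), ← r2' (star a * b) (star a),
    ← mul_assoc, ← mul_assoc, r1 a (star a * b), ha,
    show star (star a * b) = star b * a from by rw [star_mul', sstar]]

lemma eps_comm {a b : G} (h : a * star a * b = b) : eps a * eps b = eps b * eps a := by
  rw [sf h, ← r2' b a]
  simp only [eps_def, mul_assoc]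

lemma eps_adj {a c : G} (h : a * star a * c = c) :
    eps a * eps c = eps (c * star c * a) * eps c := by
  have ha : a * (star a * c) = c := by rw [← mul_assoc]; exact h
  have h' : (c * star c * a) * star (c * star c * a) * c = c := by
    simp only [star_mul', sstar, mul_assoc, c1, c2, c1', c2', comm2']
    rw [← mul_assoc]
    exact h
  rw [sf h, sf h']
  have e1 : star c * (c * star c * a) = star c * a := by
    simp only [mul_assoc, c2]
  rw [e1]
  have e2 : star (c * star c * a) = star a * (c * star c) := by
    simp only [star_mul', sstar, mul_assoc]
  rw [e2, mul_assoc, mul_assoc]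
  congr 1
  rw [ins (star c * a) (star a)]
  have e3 : star (star c * a) * (star c * a) * star a = star a * (c * star c) := by
    simp only [star_mul', sstar, mul_assoc, c2, comm2'']
  rw [e3]

end SGL2



set_option linter.unusedSectionVars false
section Lists
variable {G : Type u} [InverseSemigroup G] [DecidableEq G]

lemma epsList_nil (x : SG G) : epsList ([] : List G) x = x := rfl
lemma epsList_cons (a : G) (l : List G) (x : SG G) :
    epsList (a :: l) x = eps a * epsList l x := rfl

lemma epsList_append (l₁ l₂ : List G) (x : SG G) :
    epsList (l₁ ++ l₂) x = epsList l₁ (epsList l₂ x) := by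
  induction l₁ with
  | nil => rfl
  | cons a l ih => rw [List.cons_append, epsList_cons, epsList_cons, ih]

lemma epsList_mul (l : List G) (x y : SG G) : epsList l x * y = epsList l (x * y) := by
  induction l with
  | nil => rfl
  | cons a l ih => rw [epsList_cons, epsList_cons, mul_assoc, ih]

lemma eps_idem (a : G) : eps a * eps a = eps a := by
  show gen a * gen (star a) * (gen a * gen (star a)) = gen a * gen (star a)
  rw [← mul_assoc, r3]

lemma eps_gen (t : G) : eps t * gen t = gen t := r3 t

lemma gen_e_gen (t : G) : gen (t * star t) * gen t = gen t := by
  have h := r1 t (star t)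
  rw [sstar] at h
  exact h.symm.trans (r3 t)

lemma eps_e_gen (t : G) : eps (t * star t) * gen t = gen t := by
  have hst : star (t * star t) = t * star t := star_idem (idem_ss t)
  show gen (t * star t) * gen (star (t * star t)) * gen t = gen t
  rw [hst]
  have h2 := r2 (t * star t) t
  rw [hst, i1] at h2
  rw [h2, gen_e_gen]

/-- Permutation invariance of epsList over a fixed R-class. -/
lemma epsList_perm (e : G) : ∀ {l₁ l₂ : List G}, l₁.Perm l₂ →
    (∀ a ∈ l₁, a * star a = e) → ∀ x : SG G, epsList l₁ x = epsList l₂ x := by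
  intro l₁ l₂ hp
  induction hp with
  | nil => intro _ _; rfl
  | cons a hp ih =>
    intro hl x
    rw [epsList_cons, epsList_cons, ih (fun b hb => hl b (List.mem_cons_of_mem a hb)) x]
  | swap a b l =>
    intro hl x
    have ha : a * star a = e := hl a (by simp)
    have hb : b * star b = e := hl b (by simp)
    have hcomm : eps b * eps a = eps a * eps b := by
      refine eps_comm ?_
      rw [hb, ← ha, i1]
    rw [epsList_cons, epsList_cons, epsList_cons, epsList_cons,
      ← mul_assoc, ← mul_assoc, hcomm]
  | trans hp1 hp2 ih1 ih2 =>
    intro hl x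
    rw [ih1 hl x, ih2 (fun a ha => hl a (hp1.mem_iff.mpr ha)) x]

lemma epsList_absorb (e : G) {l : List G} (hl : ∀ a ∈ l, a * star a = e)
    {a : G} (ha : a ∈ l) (x : SG G) : eps a * epsList l x = epsList l x := by
  rw [epsList_perm e (List.perm_cons_erase ha) hl x, epsList_cons, ← mul_assoc, eps_idem]

lemma epsList_dedup (e : G) : ∀ (l : List G), (∀ a ∈ l, a * star a = e) →
    ∀ x : SG G, epsList l x = epsList l.dedup x := by
  intro l
  induction l with
  | nil => intro _ _; rfl
  | cons a l ih =>
    intro hl x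
    have hl' : ∀ b ∈ l, b * star b = e := fun b hb => hl b (List.mem_cons_of_mem a hb)
    by_cases hmem : a ∈ l
    · rw [List.dedup_cons_of_mem hmem, epsList_cons, epsList_absorb e hl' hmem x, ih hl' x]
    · rw [List.dedup_cons_of_notMem hmem, epsList_cons, epsList_cons, ih hl' x]

lemma epsList_toFinset_eq (e : G) {l₁ l₂ : List G} (h : l₁.toFinset = l₂.toFinset)
    (hl : ∀ a ∈ l₁, a * star a = e) (x : SG G) : epsList l₁ x = epsList l₂ x := by
  have hl₂ : ∀ a ∈ l₂, a * star a = e := fun a ha =>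
    hl a (List.mem_toFinset.mp (h ▸ List.mem_toFinset.mpr ha))
  rw [epsList_dedup e l₁ hl x, epsList_dedup e l₂ hl₂ x]
  exact epsList_perm e (List.toFinset_eq_iff_perm_dedup.mp h)
    (fun a ha => hl a (List.mem_dedup.mp ha)) x
end Lists



set_option linter.unusedSectionVars false
section Steps
variable {G : Type u} [InverseSemigroup G] [DecidableEq G]

lemma class_mul {f e b : G} (hff : f * f = f) (hsf : star f = f) (hfe : f * e = f)
    (hb : b * star b = e) : (f * b) * star (f * b) = f := by
  rw [star_mul', hsf]
  simp only [mul_assoc]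
  rw [← mul_assoc b (star b) f, hb, ← mul_assoc, hfe, hff]

lemma epsList_adj {e f : G} (hef : e * f = f) (hff : f * f = f) (hsf : star f = f)
    (hfe : f * e = f) :
    ∀ (l : List G), (∀ a ∈ l, a * star a = e) →
    ∀ (c : G), c * star c = f → e * c = c → ∀ x : SG G,
      epsList l (eps c * x) = epsList (l.map (fun a => f * a)) (eps c * x) := by
  intro l
  induction l with
  | nil => intro _ _ _ _ _; rfl
  | cons a l ih =>
    intro hl c hc hec x
    have ha : a * star a = e := hl a (by simp)
    have hl' : ∀ b ∈ l, b * star b = e := fun b hb => hl b (List.mem_cons_of_mem a hb)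
    have key : ∃ (c' : G) (y : SG G),
        epsList (l.map (fun a => f * a)) (eps c * x) = eps c' * y
          ∧ c' * star c' = f ∧ e * c' = c' := by
      cases l with
      | nil => exact ⟨c, x, rfl, hc, hec⟩
      | cons b l' =>
        have hb : b * star b = e := hl' b (by simp)
        refine ⟨f * b, epsList (l'.map (fun a => f * a)) (eps c * x), rfl,
          class_mul hff hsf hfe hb, ?_⟩
        rw [← mul_assoc, hef]
    obtain ⟨c', y, hrep, hc', hec'⟩ := key
    rw [List.map_cons, epsList_cons, epsList_cons, ih hl' c hc hec x, hrep,
      ← mul_assoc, ← mul_assoc]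
    congr 1
    have hadj : eps a * eps c' = eps (c' * star c' * a) * eps c' := by
      refine eps_adj ?_
      rw [ha]; exact hec'
    rw [hadj, hc']

lemma epsList_step (l : List G) (t u : G) (hl : ∀ a ∈ l, a * star a = t * star t) :
    epsList l (gen t) * gen u
      = epsList ((l.map (fun a => (t * u) * star (t * u) * a)) ++ [t * u * star u])
          (gen (t * u)) := by
  rw [epsList_mul, genK t u, epsList_append]
  have hef : (t * star t) * ((t * u) * star (t * u)) = (t * u) * star (t * u) := by
    simp only [star_mul', mul_assoc, c1]
  have hff := idem_ss (t * u)
  have hsf := star_idem hff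
  have hfe : ((t * u) * star (t * u)) * (t * star t) = (t * u) * star (t * u) := by
    simp only [star_mul', mul_assoc, c2']
  have hc : (t * u * star u) * star (t * u * star u) = (t * u) * star (t * u) := by
    simp only [star_mul', sstar, mul_assoc, c2]
  have hec : (t * star t) * (t * u * star u) = t * u * star u := by
    simp only [mul_assoc, c1]
  have h := epsList_adj hef hff hsf hfe l hl (t * u * star u) hc hec (gen (t * u))
  have hfun : (fun a => (t * u) * star (t * u) * a) = (fun a => ((t * u) * star (t * u)) * a) := rfl
  exact h

lemma step_cond (l : List G) (t u : G) (hl : ∀ a ∈ l, a * star a = t * star t) :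
    ∀ a ∈ (l.map (fun a => (t * u) * star (t * u) * a)) ++ [t * u * star u],
      a * star a = (t * u) * star (t * u) := by
  have hff := idem_ss (t * u)
  have hsf := star_idem hff
  have hfe : ((t * u) * star (t * u)) * (t * star t) = (t * u) * star (t * u) := by
    simp only [star_mul', mul_assoc, c2']
  intro a hmem
  rcases List.mem_append.mp hmem with hm | hm
  · obtain ⟨b, hb, rfl⟩ := List.mem_map.mp hm
    exact class_mul hff hsf hfe (hl b hb)
  · have : a = t * u * star u := by simpa using hm
    subst this
    simp only [star_mul', sstar, mul_assoc, c2]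

lemma freeSG_rec {C : FreeSemigroup G → Prop} (h1 : ∀ s, C (.of s))
    (h2 : ∀ w s, C w → C (w * .of s)) : ∀ w, C w := by
  intro w
  obtain ⟨h, L⟩ := w
  induction L using List.reverseRecOn with
  | nil => exact h1 h
  | append_singleton L a ih => exact h2 ⟨h, L⟩ a ih

lemma exists_rep (x : SG G) : ∃ (l : List G) (t : G),
    (∀ a ∈ l, a * star a = t * star t) ∧ x = epsList l (gen t) := by
  refine Con.induction_on x (fun w => ?_)
  show ∃ l t, _ ∧ toSG w = _
  refine freeSG_rec (C := fun w => ∃ l t,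
    (∀ a ∈ l, a * star a = t * star t) ∧ toSG w = epsList l (gen t)) ?_ ?_ w
  · intro s; exact ⟨[], s, by simp, rfl⟩
  · rintro w s ⟨l, t, hc, hrep⟩
    refine ⟨_, t * s, step_cond l t s hc, ?_⟩
    rw [toSG_mul, toSG_of, hrep, epsList_step l t s hc]

lemma exists_rep_nf (x : SG G) : ∃ p : Finset G × G,
    IsNormalForm p.1 p.2 ∧ x = epsSet p.1 (gen p.2) := by
  obtain ⟨l, t, hc, rfl⟩ := exists_rep x
  have hee : (t * star t) * star (t * star t) = t * star t := by
    rw [star_idem (idem_ss t)]; exact idem_ss t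
  refine ⟨(insert t (insert (t * star t) l.toFinset), t), ⟨by simp, by simp, ?_⟩, ?_⟩
  · intro a ha
    simp only [Finset.mem_insert, List.mem_toFinset] at ha
    rcases ha with rfl | rfl | ha
    · rfl
    · exact hee
    · exact hc a ha
  · -- epsList l (gen t) = epsSet A (gen t)
    have h1 : epsList (l ++ [t, t * star t]) (gen t) = epsList l (gen t) := by
      rw [epsList_append]
      have h2 : epsList [t, t * star t] (gen t) = gen t := by
        rw [epsList_cons, epsList_cons, epsList_nil, eps_e_gen, eps_gen]
      rw [h2]
    rw [← h1]
    show _ = epsList (insert t (insert (t * star t) l.toFinset)).toList (gen t)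
    apply epsList_toFinset_eq (t * star t)
    · rw [Finset.toList_toFinset]
      ext a
      simp only [List.toFinset_append, Finset.mem_union, List.mem_toFinset,
        List.toFinset_cons, List.toFinset_nil, Finset.mem_insert, Finset.mem_singleton,
        LawfulSingleton.insert_empty_eq]
      tauto
    · intro a ha
      rcases List.mem_append.mp ha with hm | hm
      · exact hc a hm
      · rcases List.mem_pair.mp hm with rfl | rfl
        · rfl
        · exact hee

end Steps



set_option linter.unusedSectionVars false
section Sigma
variable {G : Type u} [InverseSemigroup G] [DecidableEq G]

def piF : FreeSemigroup G →ₙ* PM G := FreeSemigroup.lift piM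

lemma piF_le : expCon G ≤ mulker (piF (G := G)) := by
  refine exp_le_mulker _ ?_ ?_ ?_
  · intro s t; simp only [piF, FreeSemigroup.lift_of]; exact piM_rel1 s t
  · intro s t; simp only [piF, FreeSemigroup.lift_of]; exact piM_rel2 s t
  · intro s; simp only [piF, FreeSemigroup.lift_of]; exact piM_rel3 s

def sigma : SG G → PM G := liftSG piF piF_le

set_option maxHeartbeats 2000000 in
lemma sigma_mul (x y : SG G) : sigma (x * y) = sigma x * sigma y := by
  unfold sigma
  exact liftSG_mul piF piF_le x y

lemma sigma_gen (s : G) : sigma (gen s) = piM s := rfl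

set_option maxHeartbeats 1000000 in
lemma piM_eps (a : G) : piM a * piM (star a) = ({a, a * star a}, a * star a) := by
  simp only [piM, pmul_def, Finset.image_union, Finset.image_insert, Finset.image_singleton,
    star_mul', sstar, mul_assoc, c1, c2, c1', c2', comm1', comm1'', Prod.mk.injEq]
  constructor
  · ext x
    simp only [Finset.mem_union, Finset.mem_insert, Finset.mem_singleton]
    tauto
  · trivial

lemma sigma_eps (a : G) : sigma (eps a) = ({a, a * star a}, a * star a) := by
  show sigma (gen a * gen (star a)) = _
  rw [sigma_mul]
  exact piM_eps a

lemma sigma_epsList : ∀ (l : List G) (t : G), (∀ a ∈ l, a * star a = t * star t) →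
    sigma (epsList l (gen t)) = (insert t (insert (t * star t) l.toFinset), t) := by
  intro l
  induction l with
  | nil =>
    intro t _
    show piM t = _
    simp [piM]
  | cons a l ih =>
    intro t hl
    have ha : a * star a = t * star t := hl a (by simp)
    have hl' : ∀ b ∈ l, b * star b = t * star t := fun b hb => hl b (List.mem_cons_of_mem a hb)
    have het : (t * star t) * t = t := i1 t
    have hst : star (t * star t) = t * star t := star_idem (idem_ss t)
    have hee : (t * star t) * (t * star t) = t * star t := idem_ss t
    have hea : (t * star t) * a = a := by rw [← ha]; exact i1 a
    rw [epsList_cons, sigma_mul, sigma_eps, ih t hl', ha, pmul_def]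
    simp only [het, hst, hee, List.toFinset_cons]
    refine Prod.ext ?_ rfl
    dsimp only
    have himg : l.toFinset.image (fun x => (t * star t) * x) = l.toFinset := by
      have heq : Set.EqOn (fun x => (t * star t) * x) id (l.toFinset : Set G) := by
        intro b hb
        show (t * star t) * b = b
        rw [← hl' b (List.mem_toFinset.mp hb)]
        exact i1 b
      rw [Finset.image_congr heq, Finset.image_id]
    rw [Finset.image_insert, Finset.image_singleton, Finset.image_insert, Finset.image_insert,
      himg, hea, het, hee]
    ext x
    simp only [Finset.mem_union, Finset.mem_insert, Finset.mem_singleton]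
    tauto

lemma sigma_epsSet {A : Finset G} {t : G} (h : IsNormalForm A t) :
    sigma (epsSet A (gen t)) = (A, t) := by
  show sigma (epsList A.toList (gen t)) = _
  rw [sigma_epsList A.toList t (fun a ha => h.2.2 a (Finset.mem_toList.mp ha)),
    Finset.toList_toFinset, Finset.insert_eq_self.mpr h.2.1, Finset.insert_eq_self.mpr h.1]

lemma exists_nf (x : SG G) : ∃ p : Finset G × G,
    IsNormalForm p.1 p.2 ∧ x = epsSet p.1 (gen p.2) := exists_rep_nf x

lemma sigma_injective : Function.Injective (sigma : SG G → PM G) := by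
  intro x y h
  obtain ⟨p, hp, rfl⟩ := exists_rep_nf x
  obtain ⟨q, hq, rfl⟩ := exists_rep_nf y
  rw [sigma_epsSet hp, sigma_epsSet hq] at h
  rw [show p = q from h]

noncomputable def NFmap : {p : Finset G × G // IsNormalForm p.1 p.2} → SG G :=
  fun p => epsSet p.1.1 (gen p.1.2)

lemma NFmap_bij : Function.Bijective (NFmap : {p : Finset G × G // IsNormalForm p.1 p.2} → SG G) := by
  constructor
  · intro p q h
    have h2 := congrArg sigma h
    rw [show sigma (NFmap p) = p.1 from sigma_epsSet p.2,
      show sigma (NFmap q) = q.1 from sigma_epsSet q.2] at h2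
    exact Subtype.ext h2
  · intro x
    obtain ⟨p, hp, hx⟩ := exists_rep_nf x
    exact ⟨⟨p, hp⟩, hx.symm⟩

lemma NF_idem_iff {A : Finset G} {t : G} (h : IsNormalForm A t) :
    (epsSet A (gen t)) * (epsSet A (gen t)) = epsSet A (gen t) ↔ t * t = t := by
  constructor
  · intro hx
    have h2 := congrArg sigma hx
    rw [sigma_mul, sigma_epsSet h] at h2
    exact congrArg Prod.snd h2
  · intro ht
    apply sigma_injective
    rw [sigma_mul, sigma_epsSet h, pmul_def]
    have hstt : star t = t := star_idem ht
    simp only [ht, hstt]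
    have himg : A.image (fun x => t * x) = A := by
      have heq : Set.EqOn (fun x => t * x) id (A : Set G) := by
        intro a ha
        show t * a = a
        have h3 := h.2.2 a ha
        calc t * a = (t * star t) * a := by rw [hstt, ht]
        _ = (a * star a) * a := by rw [h3]
        _ = a := i1 a
      rw [Finset.image_congr heq, Finset.image_id]
    rw [Finset.union_self, himg]

end Sigma



set_option linter.unusedSectionVars false
section Count
variable {G : Type u} [InverseSemigroup G] [DecidableEq G]

instance decNF : DecidablePred (fun p : Finset G × G => IsNormalForm p.1 p.2) := fun p => by
  unfold IsNormalForm
  infer_instance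

variable [Fintype G]

lemma count_idem :
    (Finset.univ.filter (fun q : Finset G × G => IsNormalForm q.1 q.2 ∧ q.2 * q.2 = q.2)).card
      = ∑ e ∈ Finset.univ.filter (fun e : G => e * e = e),
          2 ^ ((Finset.univ.filter (fun s : G => s * star s = e)).card - 1) := by
  rw [Finset.card_eq_sum_card_fiberwise (f := fun q => q.2)
    (t := Finset.univ.filter (fun e : G => e * e = e))
    (fun q hq => by
      simp only [Finset.mem_coe, Finset.mem_filter, Finset.mem_univ, true_and] at hq ⊢
      exact hq.2)]
  refine Finset.sum_congr rfl (fun e he => ?_)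
  have heid : e * e = e := (Finset.mem_filter.mp he).2
  have hese : star e = e := star_idem heid
  have hsub : ({e} : Finset G) ⊆ Finset.univ.filter (fun s : G => s * star s = e) := by
    intro a ha
    rw [Finset.mem_singleton] at ha
    subst ha
    simp only [Finset.mem_filter, Finset.mem_univ, true_and]
    rw [hese]; exact heid
  have himg : (Finset.univ.filter (fun q : Finset G × G => IsNormalForm q.1 q.2 ∧ q.2 * q.2 = q.2)).filter
        (fun q => q.2 = e)
      = (Finset.Icc ({e} : Finset G) (Finset.univ.filter (fun s : G => s * star s = e))).image
          (fun A => (A, e)) := by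
    ext ⟨A, t⟩
    simp only [Finset.mem_filter, Finset.mem_univ, true_and, Finset.mem_image, Finset.mem_Icc,
      Prod.mk.injEq]
    constructor
    · rintro ⟨⟨hNF, _⟩, rfl⟩
      refine ⟨A, ⟨Finset.singleton_subset_iff.mpr hNF.1, ?_⟩, rfl, rfl⟩
      · intro a ha
        simp only [Finset.mem_filter, Finset.mem_univ, true_and]
        rw [hNF.2.2 a ha, hese, heid]
    · rintro ⟨B, ⟨h1, h2⟩, rfl, rfl⟩
      have h1' : e ∈ B := Finset.singleton_subset_iff.mp h1
      refine ⟨⟨⟨h1', ?_, ?_⟩, heid⟩, rfl⟩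
      · rw [hese, heid]; exact h1'
      · intro a ha
        have := (Finset.mem_filter.mp (h2 ha)).2
        rw [this, hese, heid]
    done
  rw [himg, Finset.card_image_of_injective _ (fun A B h => congrArg Prod.fst h),
    Finset.card_Icc_finset hsub, Finset.card_singleton]

lemma count_nonidem :
    (Finset.univ.filter (fun q : Finset G × G => IsNormalForm q.1 q.2 ∧ ¬ q.2 * q.2 = q.2)).card
      = ∑ e ∈ Finset.univ.filter (fun e : G => e * e = e),
          2 ^ ((Finset.univ.filter (fun s : G => s * star s = e)).card - 2)
            * ((Finset.univ.filter (fun s : G => s * star s = e)).card - 1) := by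
  rw [Finset.card_eq_sum_card_fiberwise (f := fun q => q.2 * star q.2)
    (t := Finset.univ.filter (fun e : G => e * e = e))
    (fun q hq => by
      simp only [Finset.mem_coe, Finset.mem_filter, Finset.mem_univ, true_and]
      exact idem_ss q.2)]
  refine Finset.sum_congr rfl (fun e he => ?_)
  have heid : e * e = e := (Finset.mem_filter.mp he).2
  have hese : star e = e := star_idem heid
  have heR : e ∈ Finset.univ.filter (fun s : G => s * star s = e) := by
    simp only [Finset.mem_filter, Finset.mem_univ, true_and]
    rw [hese]; exact heid
  rw [Finset.filter_filter]
  rw [Finset.card_eq_sum_card_fiberwise (f := fun q => q.2)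
    (t := (Finset.univ.filter (fun s : G => s * star s = e)).erase e)
    (fun q hq => by
      simp only [Finset.mem_coe, Finset.mem_filter, Finset.mem_univ, true_and] at hq
      obtain ⟨⟨hNF, hni⟩, hcl⟩ := hq
      simp only [Finset.mem_coe, Finset.mem_erase, Finset.mem_filter, Finset.mem_univ, true_and, and_true]
      refine ⟨?_, hcl⟩
      intro hqe
      apply hni
      rw [hqe]; exact heid)]
  have hcard : ∀ t ∈ (Finset.univ.filter (fun s : G => s * star s = e)).erase e,
      ((Finset.univ.filter (fun q : Finset G × G =>
          (IsNormalForm q.1 q.2 ∧ ¬ q.2 * q.2 = q.2) ∧ q.2 * star q.2 = e)).filter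
            (fun q => q.2 = t)).card
        = 2 ^ ((Finset.univ.filter (fun s : G => s * star s = e)).card - 2) := by
    intro t ht
    rw [Finset.mem_erase] at ht
    obtain ⟨htne, htR⟩ := ht
    have hte : t * star t = e := (Finset.mem_filter.mp htR).2
    have htni : ¬ t * t = t := by
      intro htt
      apply htne
      rw [← hte, star_idem htt, htt]
    have hsub : ({t, e} : Finset G) ⊆ Finset.univ.filter (fun s : G => s * star s = e) := by
      intro a ha
      rcases Finset.mem_insert.mp ha with rfl | ha
      · exact htR
      · rw [Finset.mem_singleton] at ha; subst ha; exact heR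
    have himg : (Finset.univ.filter (fun q : Finset G × G =>
          (IsNormalForm q.1 q.2 ∧ ¬ q.2 * q.2 = q.2) ∧ q.2 * star q.2 = e)).filter
            (fun q => q.2 = t)
        = (Finset.Icc ({t, e} : Finset G) (Finset.univ.filter (fun s : G => s * star s = e))).image
            (fun A => (A, t)) := by
      ext ⟨A, t'⟩
      simp only [Finset.mem_filter, Finset.mem_univ, true_and, Finset.mem_image, Finset.mem_Icc,
        Prod.mk.injEq]
      constructor
      · rintro ⟨⟨⟨hNF, _⟩, _⟩, rfl⟩
        refine ⟨A, ⟨?_, ?_⟩, rfl, rfl⟩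
        · intro a ha
          rcases Finset.mem_insert.mp ha with rfl | ha
          · exact hNF.1
          · rw [Finset.mem_singleton] at ha; subst ha
            rw [← hte]; exact hNF.2.1
        · intro a ha
          simp only [Finset.mem_filter, Finset.mem_univ, true_and]
          rw [hNF.2.2 a ha, hte]
      · rintro ⟨B, ⟨h1, h2⟩, rfl, rfl⟩
        have htA : t ∈ B := h1 (by simp)
        have heA : e ∈ B := h1 (by simp)
        refine ⟨⟨⟨⟨htA, ?_, ?_⟩, htni⟩, hte⟩, rfl⟩
        · rw [hte]; exact heA
        · intro a ha
          have := (Finset.mem_filter.mp (h2 ha)).2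
          rw [this, hte]
    rw [himg, Finset.card_image_of_injective _ (fun A B h => congrArg Prod.fst h),
      Finset.card_Icc_finset hsub]
    congr 1
    rw [Finset.card_insert_of_notMem (by simp [htne]), Finset.card_singleton]
  rw [Finset.sum_congr rfl hcard, Finset.sum_const, Finset.card_erase_of_mem heR, smul_eq_mul,
    mul_comm]

lemma count_all :
    (Finset.univ.filter (fun q : Finset G × G => IsNormalForm q.1 q.2)).card
      = (Finset.univ.filter (fun q : Finset G × G => IsNormalForm q.1 q.2 ∧ q.2 * q.2 = q.2)).card
        + (Finset.univ.filter (fun q : Finset G × G => IsNormalForm q.1 q.2 ∧ ¬ q.2 * q.2 = q.2)).card := by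
  rw [← Finset.filter_filter, ← Finset.filter_filter,
    Finset.card_filter_add_card_filter_not]

end Count


end CardSGAux

theorem card_SG (G : Type u) [InverseSemigroup G] [Fintype G] [DecidableEq G] :
    Nat.card {x : SG G // x * x = x}
        = ∑ e ∈ Finset.univ.filter (fun e : G => e * e = e),
            2 ^ ((Finset.univ.filter (fun s : G => s * star s = e)).card - 1) ∧
    Nat.card {x : SG G // ¬ x * x = x}
        = ∑ e ∈ Finset.univ.filter (fun e : G => e * e = e),
            2 ^ ((Finset.univ.filter (fun s : G => s * star s = e)).card - 2)
              * ((Finset.univ.filter (fun s : G => s * star s = e)).card - 1) ∧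
    Nat.card (SG G)
        = (∑ e ∈ Finset.univ.filter (fun e : G => e * e = e),
            2 ^ ((Finset.univ.filter (fun s : G => s * star s = e)).card - 1))
          + ∑ e ∈ Finset.univ.filter (fun e : G => e * e = e),
            2 ^ ((Finset.univ.filter (fun s : G => s * star s = e)).card - 2)
              * ((Finset.univ.filter (fun s : G => s * star s = e)).card - 1) := by
  let eqv : {p : Finset G × G // IsNormalForm p.1 p.2} ≃ SG G :=
    Equiv.ofBijective _ CardSGAux.NFmap_bij
  have hIdem : ∀ p : {p : Finset G × G // IsNormalForm p.1 p.2},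
      (p.1.2 * p.1.2 = p.1.2) ↔ (eqv p * eqv p = eqv p) :=
    fun p => (CardSGAux.NF_idem_iff p.2).symm
  have e1 : {x : SG G // x * x = x}
      ≃ {q : Finset G × G // IsNormalForm q.1 q.2 ∧ q.2 * q.2 = q.2} :=
    ((Equiv.subtypeEquiv eqv hIdem).symm).trans (Equiv.subtypeSubtypeEquivSubtypeInter
        (fun q : Finset G × G => IsNormalForm q.1 q.2) (fun q => q.2 * q.2 = q.2))
  have e2 : {x : SG G // ¬ x * x = x}
      ≃ {q : Finset G × G // IsNormalForm q.1 q.2 ∧ ¬ q.2 * q.2 = q.2} :=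
    ((Equiv.subtypeEquiv eqv (fun p => not_congr (hIdem p))).symm).trans
      (Equiv.subtypeSubtypeEquivSubtypeInter
        (fun q : Finset G × G => IsNormalForm q.1 q.2) (fun q => ¬ q.2 * q.2 = q.2))
  refine ⟨?_, ?_, ?_⟩
  · rw [Nat.card_congr e1, Nat.card_eq_fintype_card, Fintype.card_subtype]
    exact CardSGAux.count_idem
  · rw [Nat.card_congr e2, Nat.card_eq_fintype_card, Fintype.card_subtype]
    exact CardSGAux.count_nonidem
  · rw [Nat.card_congr eqv.symm, Nat.card_eq_fintype_card, Fintype.card_subtype,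
      CardSGAux.count_all, CardSGAux.count_idem, CardSGAux.count_nonidem]
end
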